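/- For every nonnegative integer n and every real t with 0 < t < 1/2, one has (-1)^{n+1} B_{2n+1}(t) > 0, where B_m(t) is the Bernoulli polynomial. -/

import Mathlib

/-!
Induction on `n`. For `n = 0`, `B₁(t) = t - 1/2`. Suppose `(-1)^(n+1) B_{2n+1} > 0` on `(0, 1/2)`.
Since `B_{2n+2}' = (2n+2) B_{2n+1}`, the function `(-1)^(n+1) B_{2n+2}` is strictly increasing on
`[0, 1/2]`, and since `B_{2n+3}' = (2n+3) B_{2n+2}`, the function `(-1)^(n+2) B_{2n+3}` is strictly
concave there. It vanishes at `0` (odd Bernoulli numbers beyond `B₁` vanish) and at `1/2`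
(reflection `B_k(1 - x) = (-1)^k B_k(x)`), so it is positive in between.
-/

open Set Real Filter

noncomputable def B (n : ℕ) (t : ℝ) : ℝ := Polynomial.aeval t (Polynomial.bernoulli n)

noncomputable def Bnum (n : ℕ) : ℝ := ((bernoulli n : ℚ) : ℝ)

lemma B_eq_bernoulliFun : B = bernoulliFun := by
  funext n t
  simp [B, bernoulliFun, Polynomial.eval_map_algebraMap]

lemma hasDerivAt_bernoulliFun_succ (k : ℕ) (x : ℝ) :
    HasDerivAt (bernoulliFun (k + 1)) ((k + 1) * bernoulliFun k x) x := by
  simpa using hasDerivAt_bernoulliFun (k + 1) x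

lemma bernoulliFun_odd_eval_zero {k : ℕ} (hk : k ≠ 0) : bernoulliFun (2 * k + 1) 0 = 0 := by
  rw [bernoulliFun_eval_zero, bernoulli_eq_zero_of_odd ⟨k, rfl⟩ (by omega), Rat.cast_zero]

lemma StrictConcaveOn.pos_of_eq_zero_of_eq_zero {f : ℝ → ℝ} {a b x : ℝ}
    (hf : StrictConcaveOn ℝ (Icc a b) f) (ha : f a = 0) (hb : f b = 0) (hx : x ∈ Ioo a b) :
    0 < f x := by
  have hab : a < b := hx.1.trans hx.2
  simpa [ha, hb] using hf.lt_on_openSegment (left_mem_Icc.2 hab.le) (right_mem_Icc.2 hab.le)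
    hab.ne (by rwa [openSegment_eq_Ioo hab])

theorem neg_one_pow_mul_bernoulliFun_odd_pos (n : ℕ) {t : ℝ} (ht : t ∈ Ioo 0 (1 / 2)) :
    0 < (-1) ^ (n + 1) * bernoulliFun (2 * n + 1) t := by
  induction n generalizing t with
  | zero => simpa using ht.2
  | succ n ih =>
    set h : ℝ → ℝ := fun x ↦ (-1) ^ (n + 1) * bernoulliFun (2 * n + 2) x
    set g : ℝ → ℝ := fun x ↦ (-1) ^ (n + 1 + 1) * bernoulliFun (2 * (n + 1) + 1) x
    have hasDerivAt_h (x : ℝ) :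
        HasDerivAt h ((2 * n + 2) * ((-1) ^ (n + 1) * bernoulliFun (2 * n + 1) x)) x := by
      refine ((hasDerivAt_bernoulliFun_succ (2 * n + 1) x).const_mul _).congr_deriv ?_
      push_cast
      ring
    have hasDerivAt_g (x : ℝ) : HasDerivAt g (-(2 * n + 3) * h x) x := by
      refine ((hasDerivAt_bernoulliFun_succ (2 * n + 2) x).const_mul _).congr_deriv ?_
      simp only [h, pow_succ]
      push_cast
      ring
    have h_strictMonoOn : StrictMonoOn h (Icc 0 (1 / 2)) := by
      refine strictMonoOn_of_deriv_pos (convex_Icc _ _) (by fun_prop) fun x hx ↦ ?_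
      rw [interior_Icc] at hx
      rw [(hasDerivAt_h x).deriv]
      exact mul_pos (by positivity) (ih hx)
    have g_strictConcaveOn : StrictConcaveOn ℝ (Icc 0 (1 / 2)) g := by
      refine StrictAntiOn.strictConcaveOn_of_deriv (convex_Icc _ _) (by fun_prop)
        fun x hx y hy hxy ↦ ?_
      rw [interior_Icc] at hx hy
      rw [(hasDerivAt_g x).deriv, (hasDerivAt_g y).deriv]
      have := h_strictMonoOn (Ioo_subset_Icc_self hx) (Ioo_subset_Icc_self hy) hxy
      nlinarith
    refine g_strictConcaveOn.pos_of_eq_zero_of_eq_zero ?_ ?_ ht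
    · simp [g, bernoulliFun_odd_eval_zero]
    · simp [g, one_div, bernoulliFun_eval_half_eq_zero]

theorem stmt1 (n : ℕ) (t : ℝ) (ht : 0 < t) (ht2 : t < 1/2) :
    0 < (-1:ℝ)^(n+1) * B (2*n+1) t := by
  rw [B_eq_bernoulliFun]
  exact neg_one_pow_mul_bernoulliFun_odd_pos n ⟨ht, ht2⟩
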